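/- arXiv:1210.3673 — 7 statements merged into one kernel-verified Lean document; each statement's English description precedes it below -/
import Mathlib

section
/- Let λ₁, λ₂ : ℝ² → ℝ be C² functions with λ₁ ≠ λ₂ on an open set. Define the coefficients C₁⁽ˣ⁾ = −(∂λ₂/∂r₂)/(λ₁−λ₂), C₂⁽ˣ⁾ = (∂λ₁/∂r₁)/(λ₁−λ₂) of the equation for x, and C₁⁽ᵠ⁾ = (∂λ₁/∂r₂)/(λ₁−λ₂), C₂⁽ᵠ⁾ = −(∂λ₂/∂r₁)/(λ₁−λ₂) of the equation for φ. Then the Laplace invariants satisfy h⁽ˣ⁾ := ∂C₁⁽ˣ⁾/∂r₁ + C₁⁽ˣ⁾C₂⁽ˣ⁾ = −(1/(λ₁−λ₂)) ∂²λ₂/∂r₁∂r₂ − (1/(λ₁−λ₂)²) (∂λ₂/∂r₁)(∂λ₂/∂r₂), and this quantity equals k⁽ᵠ⁾ := ∂C₂⁽ᵠ⁾/∂r₂ + C₁⁽ᵠ⁾C₂⁽ᵠ⁾. -/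
/-!
Both invariants are instances of one expression `∂ᵥC₁ + C₁C₂` with `C₁ = -(∂_w λ₂)/(λ₁ - λ₂)`,
`C₂ = (∂ᵥλ₁)/(λ₁ - λ₂)`, taken along `(v, w) = (e₁, e₂)` for `h⁽ˣ⁾` and along `(e₂, e₁)` for
`k⁽ᵠ⁾`. The quotient rule turns it into `-(∂ᵥ∂_w λ₂)/(λ₁ - λ₂) - (∂ᵥλ₂)(∂_w λ₂)/(λ₁ - λ₂)²`,
the terms in `∂ᵥλ₁` cancelling, and this is symmetric in `v` and `w` by Schwarz's theorem.
-/

section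

variable {𝕜 : Type*} [NontriviallyNormedField 𝕜] {E : Type*} [NormedAddCommGroup E]
  [NormedSpace 𝕜 E]

theorem fderiv_fun_div_apply {a b : E → 𝕜} {p : E} (ha : DifferentiableAt 𝕜 a p)
    (hb : DifferentiableAt 𝕜 b p) (hbp : b p ≠ 0) (v : E) :
    fderiv 𝕜 (fun q => a q / b q) p v
      = (fderiv 𝕜 a p v * b p - a p * fderiv 𝕜 b p v) / b p ^ 2 := by
  have hinv : HasFDerivAt (fun q => (b q)⁻¹) (-(b p ^ 2)⁻¹ • fderiv 𝕜 b p) p :=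
    (hasDerivAt_inv hbp).comp_hasFDerivAt p hb.hasFDerivAt
  simp only [div_eq_mul_inv]
  rw [(ha.hasFDerivAt.fun_mul hinv).fderiv]
  simp only [add_apply, smul_apply, smul_eq_mul]
  field_simp
  ring

theorem fderiv_clm_apply_const_apply {F G : Type*} [NormedAddCommGroup F] [NormedSpace 𝕜 F]
    [NormedAddCommGroup G] [NormedSpace 𝕜 G] {c : E → F →L[𝕜] G} {p : E}
    (hc : DifferentiableAt 𝕜 c p) (u : F) (v : E) :
    fderiv 𝕜 (fun q => c q u) p v = fderiv 𝕜 c p v u := by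
  simp [fderiv_clm_apply hc (differentiableAt_const u)]

noncomputable def laplaceInvariant (f g : E → 𝕜) (v w p : E) : 𝕜 :=
  fderiv 𝕜 (fun q => -(fderiv 𝕜 g q w) / (f q - g q)) p v
    + (-(fderiv 𝕜 g p w) / (f p - g p)) * (fderiv 𝕜 f p v / (f p - g p))

variable {f g : E → 𝕜} {p : E}

theorem laplaceInvariant_eq (hf : DifferentiableAt 𝕜 f p) (hg : DifferentiableAt 𝕜 g p)
    (hg' : DifferentiableAt 𝕜 (fderiv 𝕜 g) p) (hfg : f p ≠ g p) (v w : E) :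
    laplaceInvariant f g v w p
      = -(1 / (f p - g p)) * fderiv 𝕜 (fderiv 𝕜 g) p v w
        - (1 / (f p - g p)) ^ 2 * (fderiv 𝕜 g p v * fderiv 𝕜 g p w) := by
  have hD : f p - g p ≠ 0 := sub_ne_zero.mpr hfg
  rw [laplaceInvariant, fderiv_fun_div_apply (hg'.clm_apply (differentiableAt_const w)).fun_neg
    (hf.fun_sub hg) hD v, fderiv_fun_neg, neg_apply, fderiv_clm_apply_const_apply hg',
    fderiv_fun_sub hf hg, sub_apply]
  field_simp
  ring

theorem laplaceInvariant_comm (hf : DifferentiableAt 𝕜 f p) (hg : DifferentiableAt 𝕜 g p)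
    (hg' : DifferentiableAt 𝕜 (fderiv 𝕜 g) p) (hfg : f p ≠ g p)
    (hsymm : IsSymmSndFDerivAt 𝕜 g p) (v w : E) :
    laplaceInvariant f g v w p = laplaceInvariant f g w v p := by
  rw [laplaceInvariant_eq hf hg hg' hfg, laplaceInvariant_eq hf hg hg' hfg, hsymm v w]
  ring

end

/-- For C² eigenvalues `λ₁ ≠ λ₂` on an open set, the Laplace invariant
`h⁽ˣ⁾ = ∂C₁⁽ˣ⁾/∂r₁ + C₁⁽ˣ⁾C₂⁽ˣ⁾` of the equation for `x` equals
`−(1/(λ₁−λ₂)) ∂²λ₂/∂r₁∂r₂ − (1/(λ₁−λ₂)²)(∂λ₂/∂r₁)(∂λ₂/∂r₂)`, and this equals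
the Laplace invariant `k⁽ᵠ⁾ = ∂C₂⁽ᵠ⁾/∂r₂ + C₁⁽ᵠ⁾C₂⁽ᵠ⁾` of the equation for `φ`. -/
theorem laplace_invariant_h_x_eq_k_phi
    (lam₁ lam₂ : ℝ × ℝ → ℝ) (s : Set (ℝ × ℝ)) (hs : IsOpen s)
    (hlam₁ : ContDiffOn ℝ 2 lam₁ s) (hlam₂ : ContDiffOn ℝ 2 lam₂ s)
    (hne : ∀ p ∈ s, lam₁ p ≠ lam₂ p) :
    ∀ p ∈ s,
      -- h⁽ˣ⁾ := ∂C₁⁽ˣ⁾/∂r₁ + C₁⁽ˣ⁾C₂⁽ˣ⁾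
      (fderiv ℝ (fun q => -(fderiv ℝ lam₂ q (0, 1)) / (lam₁ q - lam₂ q)) p (1, 0)
          + (-(fderiv ℝ lam₂ p (0, 1)) / (lam₁ p - lam₂ p))
            * (fderiv ℝ lam₁ p (1, 0) / (lam₁ p - lam₂ p))
        = -(1 / (lam₁ p - lam₂ p))
            * fderiv ℝ (fun q => fderiv ℝ lam₂ q (0, 1)) p (1, 0)
          - (1 / (lam₁ p - lam₂ p)) ^ 2
            * (fderiv ℝ lam₂ p (1, 0) * fderiv ℝ lam₂ p (0, 1)))
      ∧
      -- h⁽ˣ⁾ = k⁽ᵠ⁾ := ∂C₂⁽ᵠ⁾/∂r₂ + C₁⁽ᵠ⁾C₂⁽ᵠ⁾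
      (fderiv ℝ (fun q => -(fderiv ℝ lam₂ q (0, 1)) / (lam₁ q - lam₂ q)) p (1, 0)
          + (-(fderiv ℝ lam₂ p (0, 1)) / (lam₁ p - lam₂ p))
            * (fderiv ℝ lam₁ p (1, 0) / (lam₁ p - lam₂ p))
        = fderiv ℝ (fun q => -(fderiv ℝ lam₂ q (1, 0)) / (lam₁ q - lam₂ q)) p (0, 1)
          + (fderiv ℝ lam₁ p (0, 1) / (lam₁ p - lam₂ p))
            * (-(fderiv ℝ lam₂ p (1, 0)) / (lam₁ p - lam₂ p))) := by
  intro p hp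
  have h₁ : ContDiffAt ℝ 2 lam₁ p := hlam₁.contDiffAt (hs.mem_nhds hp)
  have h₂ : ContDiffAt ℝ 2 lam₂ p := hlam₂.contDiffAt (hs.mem_nhds hp)
  have hd₁ : DifferentiableAt ℝ lam₁ p := h₁.differentiableAt two_ne_zero
  have hd₂ : DifferentiableAt ℝ lam₂ p := h₂.differentiableAt two_ne_zero
  have hdd₂ : DifferentiableAt ℝ (fderiv ℝ lam₂) p :=
    (h₂.fderiv_right (m := 1) le_rfl).differentiableAt one_ne_zero
  have hsymm : IsSymmSndFDerivAt ℝ lam₂ p := h₂.isSymmSndFDerivAt (by simp)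
  rw [fderiv_clm_apply_const_apply hdd₂, mul_comm (fderiv ℝ lam₁ p (0, 1) / _)]
  exact ⟨laplaceInvariant_eq hd₁ hd₂ hdd₂ (hne p hp) (1, 0) (0, 1),
    laplaceInvariant_comm hd₁ hd₂ hdd₂ (hne p hp) hsymm (1, 0) (0, 1)⟩
end

section
/- Let ρ : ℝ² → ℝ be a C² function of (r₁,r₂), set v := (r₂ − r₁)/2, and define φ := 2 (∂ρ/∂r₁) cos v − ρ sin v and ψ := 2 (∂ρ/∂r₁) sin v + ρ cos v. Then at every point where sin v ≠ 0 and cos v ≠ 0: (i) the first conservation-law equation tan v · ∂φ/∂r₁ = ∂ψ/∂r₁ holds identically; and (ii) the second conservation-law equation −cot v · ∂φ/∂r₂ = ∂ψ/∂r₂ holds if and only if ρ satisfies the telegraph equation ∂²ρ/∂r₁∂r₂ = ρ/4. -/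
/-!
Write `θ = (r₂ - r₁)/2` and `F = 2 ∂ρ/∂r₁`, so that `(φ, ψ)` is the vector `(F, ρ)` rotated by `θ`.
Rotating the derivatives back, `cos θ · φ' + sin θ · ψ' = F' - θ' ρ` and
`sin θ · φ' - cos θ · ψ' = -(ρ' + θ' F)` in every direction. In the `r₁`-direction `θ' = -1/2`,
so the second combination vanishes, which is the first conservation law; in the `r₂`-direction
`θ' = 1/2`, so the first combination is `2 ∂²ρ/∂r₂∂r₁ - ρ/2`, and the second conservation law is
the telegraph equation once the mixed partials are exchanged.
-/

open Real

section RotatedPair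

variable {E : Type*} [NormedAddCommGroup E] [NormedSpace ℝ E] {F g θ : E → ℝ} {p : E}

theorem cos_mul_fderiv_add_sin_mul_fderiv (hF : DifferentiableAt ℝ F p)
    (hg : DifferentiableAt ℝ g p) (hθ : DifferentiableAt ℝ θ p) (u : E) :
    cos (θ p) * fderiv ℝ (fun q => F q * cos (θ q) - g q * sin (θ q)) p u
      + sin (θ p) * fderiv ℝ (fun q => F q * sin (θ q) + g q * cos (θ q)) p u
      = fderiv ℝ F p u - fderiv ℝ θ p u * g p := by
  have hφ : HasFDerivAt (fun q => F q * cos (θ q) - g q * sin (θ q)) _ p :=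
    (hF.hasFDerivAt.mul hθ.hasFDerivAt.cos).sub (hg.hasFDerivAt.mul hθ.hasFDerivAt.sin)
  have hψ : HasFDerivAt (fun q => F q * sin (θ q) + g q * cos (θ q)) _ p :=
    (hF.hasFDerivAt.mul hθ.hasFDerivAt.sin).add (hg.hasFDerivAt.mul hθ.hasFDerivAt.cos)
  rw [hφ.fderiv, hψ.fderiv]
  simp only [add_apply, sub_apply, smul_apply, smul_eq_mul]
  linear_combination (fderiv ℝ F p u - fderiv ℝ θ p u * g p) * sin_sq_add_cos_sq (θ p)

theorem sin_mul_fderiv_sub_cos_mul_fderiv (hF : DifferentiableAt ℝ F p)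
    (hg : DifferentiableAt ℝ g p) (hθ : DifferentiableAt ℝ θ p) (u : E) :
    sin (θ p) * fderiv ℝ (fun q => F q * cos (θ q) - g q * sin (θ q)) p u
      - cos (θ p) * fderiv ℝ (fun q => F q * sin (θ q) + g q * cos (θ q)) p u
      = -(fderiv ℝ g p u + fderiv ℝ θ p u * F p) := by
  have hφ : HasFDerivAt (fun q => F q * cos (θ q) - g q * sin (θ q)) _ p :=
    (hF.hasFDerivAt.mul hθ.hasFDerivAt.cos).sub (hg.hasFDerivAt.mul hθ.hasFDerivAt.sin)
  have hψ : HasFDerivAt (fun q => F q * sin (θ q) + g q * cos (θ q)) _ p :=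
    (hF.hasFDerivAt.mul hθ.hasFDerivAt.sin).add (hg.hasFDerivAt.mul hθ.hasFDerivAt.cos)
  rw [hφ.fderiv, hψ.fderiv]
  simp only [add_apply, sub_apply, smul_apply, smul_eq_mul]
  linear_combination -(fderiv ℝ g p u + fderiv ℝ θ p u * F p) * sin_sq_add_cos_sq (θ p)

end RotatedPair

section SecondDerivative

variable {𝕜 : Type*} [NontriviallyNormedField 𝕜] {E F : Type*} [NormedAddCommGroup E]
  [NormedSpace 𝕜 E] [NormedAddCommGroup F] [NormedSpace 𝕜 F] {f : E → F} {x : E}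

theorem fderiv_fderiv_apply (hf : DifferentiableAt 𝕜 (fderiv 𝕜 f) x) (v w : E) :
    fderiv 𝕜 (fun y => fderiv 𝕜 f y v) x w = fderiv 𝕜 (fderiv 𝕜 f) x w v := by
  rw [fderiv_clm_apply hf (differentiableAt_const v)]
  simp

theorem IsSymmSndFDerivAt.fderiv_fderiv_apply_comm (h : IsSymmSndFDerivAt 𝕜 f x)
    (hf : DifferentiableAt 𝕜 (fderiv 𝕜 f) x) (v w : E) :
    fderiv 𝕜 (fun y => fderiv 𝕜 f y v) x w = fderiv 𝕜 (fun y => fderiv 𝕜 f y w) x v := by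
  rw [fderiv_fderiv_apply hf, fderiv_fderiv_apply hf, h]

end SecondDerivative

theorem fderiv_half_sub_apply (p u : ℝ × ℝ) :
    fderiv ℝ (fun q : ℝ × ℝ => (q.2 - q.1) / 2) p u = (u.2 - u.1) / 2 := by
  have h : HasFDerivAt (fun q : ℝ × ℝ => (q.2 - q.1) * 2⁻¹) _ p :=
    ((hasFDerivAt_snd (𝕜 := ℝ) (p := p)).sub (hasFDerivAt_fst (𝕜 := ℝ) (p := p))).mul_const 2⁻¹
  simp_rw [div_eq_mul_inv, h.fderiv]
  simp [mul_comm]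

theorem tan_mul_eq_of_sin_mul_sub_cos_mul_eq_zero {x a b : ℝ} (hcos : cos x ≠ 0)
    (h : sin x * a - cos x * b = 0) : tan x * a = b := by
  rw [tan_eq_sin_div_cos, div_mul_eq_mul_div, div_eq_iff hcos]
  linarith

theorem neg_cos_div_sin_mul_eq_iff {x a b : ℝ} (hsin : sin x ≠ 0) :
    -(cos x / sin x) * a = b ↔ cos x * a + sin x * b = 0 := by
  rw [neg_mul, div_mul_eq_mul_div, neg_eq_iff_eq_neg, div_eq_iff hsin]
  constructor <;> intro h <;> linarith

/-- With `v = (r₂−r₁)/2`, `φ = 2 ρ_{r₁} cos v − ρ sin v`,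
`ψ = 2 ρ_{r₁} sin v + ρ cos v`, the first conservation-law equation
`tan v · ∂φ/∂r₁ = ∂ψ/∂r₁` holds identically, and the second one
`−cot v · ∂φ/∂r₂ = ∂ψ/∂r₂` holds iff `ρ` satisfies the telegraph equation
`∂²ρ/∂r₁∂r₂ = ρ/4`. -/
theorem plasticity_conservation_law_telegraph
    (ρ : ℝ × ℝ → ℝ) (hρ : ContDiff ℝ 2 ρ)
    (p : ℝ × ℝ)
    (hsin : Real.sin ((p.2 - p.1) / 2) ≠ 0)
    (hcos : Real.cos ((p.2 - p.1) / 2) ≠ 0) :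
    (Real.tan ((p.2 - p.1) / 2)
        * fderiv ℝ (fun q => 2 * fderiv ℝ ρ q (1, 0) * Real.cos ((q.2 - q.1) / 2)
            - ρ q * Real.sin ((q.2 - q.1) / 2)) p (1, 0)
      = fderiv ℝ (fun q => 2 * fderiv ℝ ρ q (1, 0) * Real.sin ((q.2 - q.1) / 2)
            + ρ q * Real.cos ((q.2 - q.1) / 2)) p (1, 0))
    ∧
    ((-(Real.cos ((p.2 - p.1) / 2) / Real.sin ((p.2 - p.1) / 2)))
        * fderiv ℝ (fun q => 2 * fderiv ℝ ρ q (1, 0) * Real.cos ((q.2 - q.1) / 2)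
            - ρ q * Real.sin ((q.2 - q.1) / 2)) p (0, 1)
      = fderiv ℝ (fun q => 2 * fderiv ℝ ρ q (1, 0) * Real.sin ((q.2 - q.1) / 2)
            + ρ q * Real.cos ((q.2 - q.1) / 2)) p (0, 1)
    ↔ fderiv ℝ (fun q => fderiv ℝ ρ q (0, 1)) p (1, 0) = ρ p / 4) := by
  have hρ₁ : DifferentiableAt ℝ ρ p := hρ.differentiable two_ne_zero p
  have hρ₂ : DifferentiableAt ℝ (fderiv ℝ ρ) p :=
    (hρ.fderiv_right le_rfl).differentiable one_ne_zero p
  have hF : DifferentiableAt ℝ (fun q => 2 * fderiv ℝ ρ q (1, 0)) p := by fun_prop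
  have hθ : DifferentiableAt ℝ (fun q : ℝ × ℝ => (q.2 - q.1) / 2) p := by fun_prop
  have hdir₂ := cos_mul_fderiv_add_sin_mul_fderiv hF hρ₁ hθ (0, 1)
  have hdir₁ := sin_mul_fderiv_sub_cos_mul_fderiv hF hρ₁ hθ (1, 0)
  simp only [fderiv_half_sub_apply, fderiv_const_mul (hρ₂.clm_apply (differentiableAt_const _)),
    smul_apply, smul_eq_mul] at hdir₂ hdir₁
  rw [(hρ.contDiffAt.isSymmSndFDerivAt (by simp)).fderiv_fderiv_apply_comm hρ₂] at hdir₂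
  refine ⟨tan_mul_eq_of_sin_mul_sub_cos_mul_eq_zero hcos (by linarith), ?_⟩
  rw [neg_cos_div_sin_mul_eq_iff hsin, hdir₂]
  constructor <;> intro h <;> linarith
end

section
/- Let α ∈ (0, π/2) with α ≠ π/4, k > 0, and let σ, Θ : ℝ² → ℝ be differentiable functions of (x,y) satisfying the plane soil plasticity system with Coulomb yield criterion: (1+cos 2α cos 2Θ) ∂σ/∂x + cos 2α sin 2Θ ∂σ/∂y = 2(σ cos 2α + k sin 2α)(sin 2Θ ∂Θ/∂x − cos 2Θ ∂Θ/∂y) and cos 2α sin 2Θ ∂σ/∂x + (1 − cos 2α cos 2Θ) ∂σ/∂y = −2(σ cos 2α + k sin 2α)(cos 2Θ ∂Θ/∂x + sin 2Θ ∂Θ/∂y), at a point where σ cot 2α + k > 0, cos(Θ+α) ≠ 0 and cos(Θ−α) ≠ 0. Then the Riemann invariants r₁ := (tan 2α / 2) ln(σ cot 2α + k) + Θ and r₂ := (tan 2α / 2) ln(σ cot 2α + k) − Θ satisfy ∂r₁/∂x + tan(Θ+α) ∂r₁/∂y = 0 and ∂r₂/∂x + tan(Θ−α) ∂r₂/∂y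 = 0 at that point. -/
/-! In the characteristic angles `A = Θ + α`, `B = Θ - α` one has `2Θ = A + B` and `2α = A - B`,
and the combinations `-sin B · (first equation) + cos B · (second)` and
`sin A · (first) - cos A · (second)` keep only derivatives along `(cos A, sin A)`, resp.
`(cos B, sin B)`. With `g = σ cot 2α + k` they read `∂σ + 2g ∂Θ = 0` along `A` and
`∂σ - 2g ∂Θ = 0` along `B`; since `tan 2α · cot 2α = 1`, `∂r₁,₂ = ∂σ / (2g) ± ∂Θ`, so `r₁` is
constant along `A` and `r₂` along `B`. -/

open Real

theorem coulomb_characteristic_relations {α θ Lx Ly Mx My S : ℝ}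
    (h₁ : (1 + cos (2 * α) * cos (2 * θ)) * Lx + cos (2 * α) * sin (2 * θ) * Ly
      = S * (sin (2 * θ) * Mx - cos (2 * θ) * My))
    (h₂ : cos (2 * α) * sin (2 * θ) * Lx + (1 - cos (2 * α) * cos (2 * θ)) * Ly
      = -(S * (cos (2 * θ) * Mx + sin (2 * θ) * My))) :
    sin (2 * α) * (cos (θ + α) * Lx + sin (θ + α) * Ly)
        + S * (cos (θ + α) * Mx + sin (θ + α) * My) = 0 ∧
      sin (2 * α) * (cos (θ - α) * Lx + sin (θ - α) * Ly)
        - S * (cos (θ - α) * Mx + sin (θ - α) * My) = 0 := by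
  have h2θ : 2 * θ = (θ + α) + (θ - α) := by ring
  have h2α : 2 * α = (θ + α) - (θ - α) := by ring
  rw [h2θ] at h₁ h₂
  rw [h2α] at h₁ h₂ ⊢
  generalize θ + α = A at h₁ h₂ ⊢
  generalize θ - α = B at h₁ h₂ ⊢
  simp only [sin_add, cos_add, sin_sub, cos_sub] at h₁ h₂ ⊢
  have hA := sin_sq_add_cos_sq A
  have hB := sin_sq_add_cos_sq B
  set sA := sin A
  set cA := cos A
  set sB := sin B
  set cB := cos B
  constructor
  · linear_combination -sB * h₁ + cB * h₂ + (-sB * Lx + cB * Ly) * hA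
      - ((cA * cB + sA * sB) * (sA * Lx - cA * Ly) + S * (cA * Mx + sA * My)) * hB
  · linear_combination sA * h₁ - cA * h₂ + (sA * Lx - cA * Ly) * hB
      + ((cA * cB + sA * sB) * (sB * Lx - cB * Ly) + S * (cB * Mx + sB * My)) * hA

theorem hasFDerivAt_const_mul_log_mul_const_add {E : Type*} [NormedAddCommGroup E]
    [NormedSpace ℝ E] {f : E → ℝ} {f' : E →L[ℝ] ℝ} {p : E} (a c k : ℝ)
    (hf : HasFDerivAt f f' p) (hp : f p * c + k ≠ 0) :
    HasFDerivAt (fun q => a * log (f q * c + k)) ((a * c / (f p * c + k)) • f') p := by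
  have h := ((hasDerivAt_log hp).comp_hasFDerivAt p ((hf.mul_const c).add_const k)).const_mul a
  refine h.congr_fderiv ?_
  ext
  simp only [smul_apply, smul_eq_mul]
  field_simp

theorem add_tan_mul_eq_zero {θ u v : ℝ} (hθ : cos θ ≠ 0) (h : cos θ * u + sin θ * v = 0) :
    u + tan θ * v = 0 := by
  rw [tan_eq_sin_div_cos]
  field_simp
  linear_combination h

theorem cos_two_mul_ne_zero {α : ℝ} (hα : α ∈ Set.Ioo 0 (π / 2)) (hα4 : α ≠ π / 4) :
    cos (2 * α) ≠ 0 := by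
  obtain ⟨hα0, hα2⟩ := hα
  intro h
  have : 2 * α = π / 2 :=
    injOn_cos ⟨by linarith, by linarith⟩ ⟨by linarith [pi_pos], by linarith [pi_pos]⟩
      (h.trans cos_pi_div_two.symm)
  exact hα4 (by linarith)

theorem coulomb_plasticity_riemann_invariants_general
    (α k : ℝ) (hα : α ∈ Set.Ioo 0 (Real.pi / 2)) (hα4 : α ≠ Real.pi / 4)
    (σ Θ : ℝ × ℝ → ℝ)
    (hσ : Differentiable ℝ σ) (hΘ : Differentiable ℝ Θ)
    (p : ℝ × ℝ)
    (heq₁ : (1 + Real.cos (2 * α) * Real.cos (2 * Θ p)) * fderiv ℝ σ p (1, 0)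
        + Real.cos (2 * α) * Real.sin (2 * Θ p) * fderiv ℝ σ p (0, 1)
      = 2 * (σ p * Real.cos (2 * α) + k * Real.sin (2 * α))
          * (Real.sin (2 * Θ p) * fderiv ℝ Θ p (1, 0)
            - Real.cos (2 * Θ p) * fderiv ℝ Θ p (0, 1)))
    (heq₂ : Real.cos (2 * α) * Real.sin (2 * Θ p) * fderiv ℝ σ p (1, 0)
        + (1 - Real.cos (2 * α) * Real.cos (2 * Θ p)) * fderiv ℝ σ p (0, 1)
      = -(2 * (σ p * Real.cos (2 * α) + k * Real.sin (2 * α))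
          * (Real.cos (2 * Θ p) * fderiv ℝ Θ p (1, 0)
            + Real.sin (2 * Θ p) * fderiv ℝ Θ p (0, 1))))
    (hpos : 0 < σ p * (Real.cos (2 * α) / Real.sin (2 * α)) + k)
    (hc₁ : Real.cos (Θ p + α) ≠ 0) (hc₂ : Real.cos (Θ p - α) ≠ 0) :
    (fderiv ℝ (fun q => Real.tan (2 * α) / 2
          * Real.log (σ q * (Real.cos (2 * α) / Real.sin (2 * α)) + k) + Θ q) p (1, 0)
        + Real.tan (Θ p + α)
          * fderiv ℝ (fun q => Real.tan (2 * α) / 2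
            * Real.log (σ q * (Real.cos (2 * α) / Real.sin (2 * α)) + k) + Θ q) p (0, 1)
      = 0)
    ∧ (fderiv ℝ (fun q => Real.tan (2 * α) / 2
          * Real.log (σ q * (Real.cos (2 * α) / Real.sin (2 * α)) + k) - Θ q) p (1, 0)
        + Real.tan (Θ p - α)
          * fderiv ℝ (fun q => Real.tan (2 * α) / 2
            * Real.log (σ q * (Real.cos (2 * α) / Real.sin (2 * α)) + k) - Θ q) p (0, 1)
      = 0) := by
  have hsin : sin (2 * α) ≠ 0 :=
    (sin_pos_of_pos_of_lt_pi (by linarith [hα.1]) (by linarith [hα.2])).ne'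
  have hcos := cos_two_mul_ne_zero hα hα4
  have hlog := hasFDerivAt_const_mul_log_mul_const_add (tan (2 * α) / 2)
    (cos (2 * α) / sin (2 * α)) k (hσ p).hasFDerivAt hpos.ne'
  have hr₁ := (hlog.fun_add (hΘ p).hasFDerivAt).fderiv
  have hr₂ := (hlog.fun_sub (hΘ p).hasFDerivAt).fderiv
  obtain ⟨hA, hB⟩ := coulomb_characteristic_relations heq₁ heq₂
  set g := σ p * (cos (2 * α) / sin (2 * α)) + k
  have hcoef : tan (2 * α) / 2 * (cos (2 * α) / sin (2 * α)) / g = 1 / (2 * g) := by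
    rw [tan_eq_sin_div_cos]
    field_simp
  have hS : 2 * (σ p * cos (2 * α) + k * sin (2 * α)) = sin (2 * α) * (2 * g) := by
    simp only [g]
    field_simp
  rw [hS] at hA hB
  clear_value g
  rw [hr₁, hr₂]
  simp only [add_apply, sub_apply, smul_apply, smul_eq_mul, hcoef]
  constructor
  · refine add_tan_mul_eq_zero hc₁ ?_
    field_simp
    apply mul_left_cancel₀ hsin
    linear_combination hA
  · refine add_tan_mul_eq_zero hc₂ ?_
    field_simp
    apply mul_left_cancel₀ hsin
    linear_combination hB

/-- For a differentiable solution `(σ, Θ)` of the plane soil plasticity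
system with Coulomb yield criterion, the Riemann invariants
`r₁,₂ = (tan 2α / 2) ln(σ cot 2α + k) ± Θ` satisfy
`∂r₁/∂x + tan(Θ+α) ∂r₁/∂y = 0` and `∂r₂/∂x + tan(Θ−α) ∂r₂/∂y = 0`. -/
theorem coulomb_plasticity_riemann_invariants
    (α k : ℝ) (hα : α ∈ Set.Ioo 0 (Real.pi / 2)) (hα4 : α ≠ Real.pi / 4)
    (hk : 0 < k) (σ Θ : ℝ × ℝ → ℝ)
    (hσ : Differentiable ℝ σ) (hΘ : Differentiable ℝ Θ)
    (p : ℝ × ℝ)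
    (heq₁ : (1 + Real.cos (2 * α) * Real.cos (2 * Θ p)) * fderiv ℝ σ p (1, 0)
        + Real.cos (2 * α) * Real.sin (2 * Θ p) * fderiv ℝ σ p (0, 1)
      = 2 * (σ p * Real.cos (2 * α) + k * Real.sin (2 * α))
          * (Real.sin (2 * Θ p) * fderiv ℝ Θ p (1, 0)
            - Real.cos (2 * Θ p) * fderiv ℝ Θ p (0, 1)))
    (heq₂ : Real.cos (2 * α) * Real.sin (2 * Θ p) * fderiv ℝ σ p (1, 0)
        + (1 - Real.cos (2 * α) * Real.cos (2 * Θ p)) * fderiv ℝ σ p (0, 1)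
      = -(2 * (σ p * Real.cos (2 * α) + k * Real.sin (2 * α))
          * (Real.cos (2 * Θ p) * fderiv ℝ Θ p (1, 0)
            + Real.sin (2 * Θ p) * fderiv ℝ Θ p (0, 1))))
    (hpos : 0 < σ p * (Real.cos (2 * α) / Real.sin (2 * α)) + k)
    (hc₁ : Real.cos (Θ p + α) ≠ 0) (hc₂ : Real.cos (Θ p - α) ≠ 0) :
    (fderiv ℝ (fun q => Real.tan (2 * α) / 2
          * Real.log (σ q * (Real.cos (2 * α) / Real.sin (2 * α)) + k) + Θ q) p (1, 0)
        + Real.tan (Θ p + α)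
          * fderiv ℝ (fun q => Real.tan (2 * α) / 2
            * Real.log (σ q * (Real.cos (2 * α) / Real.sin (2 * α)) + k) + Θ q) p (0, 1)
      = 0)
    ∧ (fderiv ℝ (fun q => Real.tan (2 * α) / 2
          * Real.log (σ q * (Real.cos (2 * α) / Real.sin (2 * α)) + k) - Θ q) p (1, 0)
        + Real.tan (Θ p - α)
          * fderiv ℝ (fun q => Real.tan (2 * α) / 2
            * Real.log (σ q * (Real.cos (2 * α) / Real.sin (2 * α)) + k) - Θ q) p (0, 1)
      = 0) :=
  coulomb_plasticity_riemann_invariants_general α k hα hα4 σ Θ hσ hΘ p heq₁ heq₂ hpos hc₁ hc₂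
end

section
/- Let α ∈ (0, π/2) with sin 2α ≠ 0, and let Φ, Ψ : ℝ² → ℝ be C¹ functions of (r₁,r₂) satisfying ∂Φ/∂r₂ + Ψ/(2 sin 2α) = 0 and ∂Ψ/∂r₁ + Φ/(2 sin 2α) = 0. Set Θ := (r₁ − r₂)/2 and define φ := (e^{cot 2α·(r₁+r₂)/2}/sin 2α)·(−Φ cos(Θ+α) + Ψ cos(Θ−α)) and ψ := (e^{cot 2α·(r₁+r₂)/2}/sin 2α)·(−Φ sin(Θ+α) + Ψ sin(Θ−α)). Then, at every point where cos(Θ+α) ≠ 0 and cos(Θ−α) ≠ 0, the pair (φ, ψ) satisfies the conservation-law system of the Coulomb plasticity problem: ∂ψ/∂r₁ − tan((r₁−r₂)/2 + α) ∂φ/∂r₁ = 0 and ∂ψ/∂r₂ − tan((r₁−r₂)/2 − α) ∂φ/∂r₂ = 0. -/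
/-!
Write `w` for the exponential weight, `A = Θ + α`, `B = Θ - α`, so that
`φ = w (-Φ cos A + Ψ cos B)` and `ψ = w (-Φ sin A + Ψ sin B)`. For a constant `c`,
`cos c * ψ - sin c * φ = w (-Φ sin (A - c) + Ψ sin (B - c))`; at `c = A p` the derivative of this
combination no longer involves `∂Φ`, and since `B - A = -2α` and `∂₁ w = (cot 2α / 2) w`, the
`∂₁`-derivative reduces to `-w sin 2α (∂Ψ/∂r₁ + Φ / (2 sin 2α)) = 0`. The case `c = B p`, `∂₂` is
symmetric. Dividing by `cos c` gives the `tan` form of the system.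
-/

open Real

theorem sub_tan_mul_eq_zero {a x y : ℝ} (ha : cos a ≠ 0) (h : cos a * x - sin a * y = 0) :
    x - tan a * y = 0 := by
  rw [tan_eq_sin_div_cos]
  field_simp
  linear_combination h

theorem cos_mul_fderiv_sub_sin_mul_fderiv {E : Type*} [NormedAddCommGroup E] [NormedSpace ℝ E]
    {w F G A B : E → ℝ} {w' F' G' A' B' : E →L[ℝ] ℝ} {p : E} (hw : HasFDerivAt w w' p)
    (hF : HasFDerivAt F F' p) (hG : HasFDerivAt G G' p) (hA : HasFDerivAt A A' p) (hB : HasFDerivAt B B' p) (c : ℝ) (v : E) :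
    cos c * fderiv ℝ (fun q => w q * (-F q * sin (A q) + G q * sin (B q))) p v
      - sin c * fderiv ℝ (fun q => w q * (-F q * cos (A q) + G q * cos (B q))) p v
      = w' v * (-F p * sin (A p - c) + G p * sin (B p - c))
        + w p * (-(F' v * sin (A p - c) + F p * cos (A p - c) * A' v)
          + (G' v * sin (B p - c) + G p * cos (B p - c) * B' v)) := by
  have hψ : HasFDerivAt (fun q => w q * (-F q * sin (A q) + G q * sin (B q))) _ p :=
    hw.mul ((hF.neg.mul hA.sin).add (hG.mul hB.sin))
  have hφ : HasFDerivAt (fun q => w q * (-F q * cos (A q) + G q * cos (B q))) _ p :=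
    hw.mul ((hF.neg.mul hA.cos).add (hG.mul hB.cos))
  rw [hψ.fderiv, hφ.fderiv]
  simp only [add_apply, smul_apply, neg_apply, Pi.neg_apply, smul_eq_mul, sin_sub, cos_sub]
  ring

theorem hasFDerivAt_exp_mul_add_div (k s : ℝ) (p : ℝ × ℝ) :
    HasFDerivAt (fun q : ℝ × ℝ => exp (k * (q.1 + q.2) / 2) / s)
      ((exp (k * (p.1 + p.2) / 2) / s * (k / 2)) •
        (ContinuousLinearMap.fst ℝ ℝ ℝ + ContinuousLinearMap.snd ℝ ℝ ℝ)) p := by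
  have hsum := (hasFDerivAt_fst (𝕜 := ℝ) (p := p)).fun_add hasFDerivAt_snd
  refine (((hsum.const_mul k).mul_const 2⁻¹).exp.mul_const s⁻¹).congr_fderiv ?_
  ext <;> simp [div_eq_mul_inv] <;> ring

theorem hasFDerivAt_half_sub (p : ℝ × ℝ) :
    HasFDerivAt (fun q : ℝ × ℝ => (q.1 - q.2) / 2)
      ((1 / 2 : ℝ) • (ContinuousLinearMap.fst ℝ ℝ ℝ - ContinuousLinearMap.snd ℝ ℝ ℝ)) p := by
  have hdiff := (hasFDerivAt_fst (𝕜 := ℝ) (p := p)).fun_sub hasFDerivAt_snd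
  refine (hdiff.mul_const 2⁻¹).congr_fderiv ?_
  ext <;> simp

theorem coulomb_substitution_conservation_law_general
    (α : ℝ) (hsin : Real.sin (2 * α) ≠ 0)
    (Φ Ψ : ℝ × ℝ → ℝ) (hΦ : ContDiff ℝ 1 Φ) (hΨ : ContDiff ℝ 1 Ψ)
    (h₁ : ∀ p : ℝ × ℝ, fderiv ℝ Φ p (0, 1) + Ψ p / (2 * Real.sin (2 * α)) = 0)
    (h₂ : ∀ p : ℝ × ℝ, fderiv ℝ Ψ p (1, 0) + Φ p / (2 * Real.sin (2 * α)) = 0) :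
    ∀ p : ℝ × ℝ, Real.cos ((p.1 - p.2) / 2 + α) ≠ 0 →
      Real.cos ((p.1 - p.2) / 2 - α) ≠ 0 →
      (fderiv ℝ (fun q =>
            Real.exp ((Real.cos (2 * α) / Real.sin (2 * α)) * (q.1 + q.2) / 2)
              / Real.sin (2 * α)
              * (-(Φ q) * Real.sin ((q.1 - q.2) / 2 + α)
                + Ψ q * Real.sin ((q.1 - q.2) / 2 - α))) p (1, 0)
          - Real.tan ((p.1 - p.2) / 2 + α)
            * fderiv ℝ (fun q =>
                Real.exp ((Real.cos (2 * α) / Real.sin (2 * α)) * (q.1 + q.2) / 2)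
                  / Real.sin (2 * α)
                  * (-(Φ q) * Real.cos ((q.1 - q.2) / 2 + α)
                    + Ψ q * Real.cos ((q.1 - q.2) / 2 - α))) p (1, 0) = 0)
      ∧ (fderiv ℝ (fun q =>
            Real.exp ((Real.cos (2 * α) / Real.sin (2 * α)) * (q.1 + q.2) / 2)
              / Real.sin (2 * α)
              * (-(Φ q) * Real.sin ((q.1 - q.2) / 2 + α)
                + Ψ q * Real.sin ((q.1 - q.2) / 2 - α))) p (0, 1)
          - Real.tan ((p.1 - p.2) / 2 - α)
            * fderiv ℝ (fun q =>
                Real.exp ((Real.cos (2 * α) / Real.sin (2 * α)) * (q.1 + q.2) / 2)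
                  / Real.sin (2 * α)
                  * (-(Φ q) * Real.cos ((q.1 - q.2) / 2 + α)
                    + Ψ q * Real.cos ((q.1 - q.2) / 2 - α))) p (0, 1) = 0) := by
  intro p hA hB
  have hΘ := hasFDerivAt_half_sub p
  have hrot := cos_mul_fderiv_sub_sin_mul_fderiv
    (hasFDerivAt_exp_mul_add_div (cos (2 * α) / sin (2 * α)) (sin (2 * α)) p)
    (hΦ.differentiable one_ne_zero p).hasFDerivAt (hΨ.differentiable one_ne_zero p).hasFDerivAt
    (hΘ.add_const α) (hΘ.sub_const α)
  constructor
  · apply sub_tan_mul_eq_zero hA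
    rw [hrot]
    have hBA : (p.1 - p.2) / 2 - α - ((p.1 - p.2) / 2 + α) = -(2 * α) := by ring
    simp only [add_apply, sub_apply, smul_apply, ContinuousLinearMap.coe_fst',
      ContinuousLinearMap.coe_snd', smul_eq_mul, sub_self, sin_zero, cos_zero, hBA, sin_neg, cos_neg]
    generalize exp (cos (2 * α) / sin (2 * α) * (p.1 + p.2) / 2) = e
    linear_combination (norm := (field_simp; ring)) (-e) * h₂ p
  · apply sub_tan_mul_eq_zero hB
    rw [hrot]
    have hAB : (p.1 - p.2) / 2 + α - ((p.1 - p.2) / 2 - α) = 2 * α := by ring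
    simp only [add_apply, sub_apply, smul_apply, ContinuousLinearMap.coe_fst',
      ContinuousLinearMap.coe_snd', smul_eq_mul, sub_self, sin_zero, cos_zero, hAB]
    generalize exp (cos (2 * α) / sin (2 * α) * (p.1 + p.2) / 2) = e
    linear_combination (norm := (field_simp; ring)) (-e) * h₁ p

/-- If `(Φ, Ψ)` solve `∂Φ/∂r₂ + Ψ/(2 sin 2α) = 0`,
`∂Ψ/∂r₁ + Φ/(2 sin 2α) = 0`, then with `Θ = (r₁−r₂)/2`,
`φ = (e^{cot 2α (r₁+r₂)/2}/sin 2α)(−Φ cos(Θ+α) + Ψ cos(Θ−α))`,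
`ψ = (e^{cot 2α (r₁+r₂)/2}/sin 2α)(−Φ sin(Θ+α) + Ψ sin(Θ−α))`, the pair `(φ,ψ)`
satisfies the conservation-law system of the Coulomb plasticity problem. -/
theorem coulomb_substitution_conservation_law
    (α : ℝ) (hα : α ∈ Set.Ioo 0 (Real.pi / 2)) (hsin : Real.sin (2 * α) ≠ 0)
    (Φ Ψ : ℝ × ℝ → ℝ) (hΦ : ContDiff ℝ 1 Φ) (hΨ : ContDiff ℝ 1 Ψ)
    (h₁ : ∀ p : ℝ × ℝ, fderiv ℝ Φ p (0, 1) + Ψ p / (2 * Real.sin (2 * α)) = 0)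
    (h₂ : ∀ p : ℝ × ℝ, fderiv ℝ Ψ p (1, 0) + Φ p / (2 * Real.sin (2 * α)) = 0) :
    ∀ p : ℝ × ℝ, Real.cos ((p.1 - p.2) / 2 + α) ≠ 0 →
      Real.cos ((p.1 - p.2) / 2 - α) ≠ 0 →
      (fderiv ℝ (fun q =>
            Real.exp ((Real.cos (2 * α) / Real.sin (2 * α)) * (q.1 + q.2) / 2)
              / Real.sin (2 * α)
              * (-(Φ q) * Real.sin ((q.1 - q.2) / 2 + α)
                + Ψ q * Real.sin ((q.1 - q.2) / 2 - α))) p (1, 0)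
          - Real.tan ((p.1 - p.2) / 2 + α)
            * fderiv ℝ (fun q =>
                Real.exp ((Real.cos (2 * α) / Real.sin (2 * α)) * (q.1 + q.2) / 2)
                  / Real.sin (2 * α)
                  * (-(Φ q) * Real.cos ((q.1 - q.2) / 2 + α)
                    + Ψ q * Real.cos ((q.1 - q.2) / 2 - α))) p (1, 0) = 0)
      ∧ (fderiv ℝ (fun q =>
            Real.exp ((Real.cos (2 * α) / Real.sin (2 * α)) * (q.1 + q.2) / 2)
              / Real.sin (2 * α)
              * (-(Φ q) * Real.sin ((q.1 - q.2) / 2 + α)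
                + Ψ q * Real.sin ((q.1 - q.2) / 2 - α))) p (0, 1)
          - Real.tan ((p.1 - p.2) / 2 - α)
            * fderiv ℝ (fun q =>
                Real.exp ((Real.cos (2 * α) / Real.sin (2 * α)) * (q.1 + q.2) / 2)
                  / Real.sin (2 * α)
                  * (-(Φ q) * Real.cos ((q.1 - q.2) / 2 + α)
                    + Ψ q * Real.cos ((q.1 - q.2) / 2 - α))) p (0, 1) = 0) :=
  coulomb_substitution_conservation_law_general α hsin Φ Ψ hΦ hΨ h₁ h₂
end

section
/- Let χ₀, τ₀ > 0 and let u, v : ℝ² → ℝ be C² functions of (x,y) with u > 0 satisfying the system ∂u/∂x − ∂v/∂y = 0 and ∂v/∂x − (χ₀²/u²) ∂u/∂y = 0. Define U(t,X) := τ₀ e^{−t/τ₀} u(e^{t/τ₀}, X). Then U satisfies the nonlinear hyperbolic heat equation ∂/∂t (∂U/∂t + U/τ₀) − ∂/∂X ((χ₀²/U²) ∂U/∂X) = 0 for all (t, X) ∈ ℝ². -/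
/-!
With `x = e^{t/τ₀}`, the first equation of the system turns `∂U/∂t + U/τ₀` into `∂v/∂y`, and
the second turns `(χ₀²/U²) ∂U/∂X` into `(e^{t/τ₀}/τ₀) ∂v/∂x`, both evaluated at `(e^{t/τ₀}, X)`.
Differentiating once more, each term of the heat equation becomes `e^{t/τ₀}/τ₀` times a mixed
second derivative of `v`, so they cancel by the symmetry of second derivatives.
-/

open Real ContinuousLinearMap

def rescaleFst (a φ : ℝ → ℝ) (h : ℝ × ℝ → ℝ) : ℝ × ℝ → ℝ :=
  fun w => a w.1 * h (φ w.1, w.2)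

section rescaleFst

variable {a φ : ℝ → ℝ} {h : ℝ × ℝ → ℝ} {a' φ' : ℝ} {h' : ℝ × ℝ →L[ℝ] ℝ} {w : ℝ × ℝ}

theorem hasFDerivAt_rescaleFst (ha : HasDerivAt a a' w.1) (hφ : HasDerivAt φ φ' w.1)
    (hh : HasFDerivAt h h' (φ w.1, w.2)) :
    HasFDerivAt (rescaleFst a φ h)
      (a w.1 • h'.comp ((φ' • fst ℝ ℝ ℝ).prod (snd ℝ ℝ ℝ))
        + h (φ w.1, w.2) • a' • fst ℝ ℝ ℝ) w := by
  have hfst : HasFDerivAt (fun w : ℝ × ℝ => w.1) (fst ℝ ℝ ℝ) w := hasFDerivAt_fst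
  have hstretch : HasFDerivAt (fun w : ℝ × ℝ => (φ w.1, w.2))
      ((φ' • fst ℝ ℝ ℝ).prod (snd ℝ ℝ ℝ)) w :=
    (hφ.comp_hasFDerivAt w hfst).prodMk hasFDerivAt_snd
  exact (ha.comp_hasFDerivAt w hfst).mul (hh.comp w hstretch)

theorem fderiv_rescaleFst_apply_one_zero (ha : HasDerivAt a a' w.1) (hφ : HasDerivAt φ φ' w.1)
    (hh : DifferentiableAt ℝ h (φ w.1, w.2)) :
    fderiv ℝ (rescaleFst a φ h) w (1, 0)
      = a' * h (φ w.1, w.2) + a w.1 * φ' * fderiv ℝ h (φ w.1, w.2) (1, 0) := by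
  rw [(hasFDerivAt_rescaleFst ha hφ hh.hasFDerivAt).fderiv]
  have hdir : ((φ', 0) : ℝ × ℝ) = φ' • (1, 0) := by simp
  simp only [add_apply, smul_apply, comp_apply, prod_apply, coe_fst', coe_snd', smul_eq_mul,
    mul_one]
  rw [hdir, map_smul, smul_eq_mul]
  ring

theorem fderiv_rescaleFst_apply_zero_one (ha : DifferentiableAt ℝ a w.1)
    (hφ : DifferentiableAt ℝ φ w.1) (hh : DifferentiableAt ℝ h (φ w.1, w.2)) :
    fderiv ℝ (rescaleFst a φ h) w (0, 1) = a w.1 * fderiv ℝ h (φ w.1, w.2) (0, 1) := by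
  rw [(hasFDerivAt_rescaleFst ha.hasDerivAt hφ.hasDerivAt hh.hasFDerivAt).fderiv]
  simp

end rescaleFst

theorem fderiv_fderiv_apply_s14 {𝕜 E F G : Type*} [NontriviallyNormedField 𝕜]
    [NormedAddCommGroup E] [NormedSpace 𝕜 E] [NormedAddCommGroup F] [NormedSpace 𝕜 F]
    [NormedAddCommGroup G] [NormedSpace 𝕜 G]
    {f : E → F →L[𝕜] G} {x : E} (hf : DifferentiableAt 𝕜 f x) (e : F) (d : E) :
    fderiv 𝕜 (fun y => f y e) x d = fderiv 𝕜 f x d e := by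
  rw [fderiv_clm_apply hf (differentiableAt_const e)]
  simp

theorem hasDerivAt_exp_div (τ t : ℝ) : HasDerivAt (fun t => exp (t / τ)) (exp (t / τ) / τ) t :=
  (((hasDerivAt_id t).div_const τ).exp).congr_deriv (by simp [div_eq_mul_inv])

theorem hasDerivAt_mul_exp_neg_div {τ : ℝ} (hτ : τ ≠ 0) (t : ℝ) :
    HasDerivAt (fun t => τ * exp (-t / τ)) (-exp (-t / τ)) t :=
  ((((hasDerivAt_neg t).div_const τ).exp).const_mul τ).congr_deriv (by field_simp)

noncomputable def expRescale (τ : ℝ) (u : ℝ × ℝ → ℝ) : ℝ × ℝ → ℝ :=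
  rescaleFst (fun t => τ * exp (-t / τ)) (fun t => exp (t / τ)) u

section expRescale

variable {τ : ℝ} {u : ℝ × ℝ → ℝ} {w : ℝ × ℝ}

theorem fderiv_expRescale_apply_one_zero_add_div (hτ : τ ≠ 0)
    (hu : DifferentiableAt ℝ u (exp (w.1 / τ), w.2)) :
    fderiv ℝ (expRescale τ u) w (1, 0) + expRescale τ u w / τ
      = fderiv ℝ u (exp (w.1 / τ), w.2) (1, 0) := by
  rw [expRescale, fderiv_rescaleFst_apply_one_zero (hasDerivAt_mul_exp_neg_div hτ w.1)
    (hasDerivAt_exp_div τ w.1) hu, rescaleFst, neg_div, exp_neg]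
  field_simp
  ring

theorem div_sq_mul_fderiv_expRescale_apply_zero_one (hτ : τ ≠ 0)
    (hu : DifferentiableAt ℝ u (exp (w.1 / τ), w.2)) (c : ℝ) :
    c / expRescale τ u w ^ 2 * fderiv ℝ (expRescale τ u) w (0, 1)
      = exp (w.1 / τ) / τ
          * (c / u (exp (w.1 / τ), w.2) ^ 2 * fderiv ℝ u (exp (w.1 / τ), w.2) (0, 1)) := by
  rw [expRescale, fderiv_rescaleFst_apply_zero_one (by fun_prop) (by fun_prop) hu, rescaleFst,
    neg_div, exp_neg]
  field_simp

end expRescale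

theorem hyperbolic_heat_equation_general
    (χ₀ τ₀ : ℝ) (hτ₀ : 0 < τ₀)
    (u v : ℝ × ℝ → ℝ) (hu : ContDiff ℝ 2 u) (hv : ContDiff ℝ 2 v)
    (heq₁ : ∀ p : ℝ × ℝ, fderiv ℝ u p (1, 0) - fderiv ℝ v p (0, 1) = 0)
    (heq₂ : ∀ p : ℝ × ℝ,
      fderiv ℝ v p (1, 0) - χ₀ ^ 2 / (u p) ^ 2 * fderiv ℝ u p (0, 1) = 0)
    (U : ℝ × ℝ → ℝ)
    (hU : U = fun w => τ₀ * Real.exp (-w.1 / τ₀) * u (Real.exp (w.1 / τ₀), w.2)) :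
    ∀ w : ℝ × ℝ,
      fderiv ℝ (fun w' => fderiv ℝ U w' (1, 0) + U w' / τ₀) w (1, 0)
        - fderiv ℝ (fun w' => χ₀ ^ 2 / (U w') ^ 2 * fderiv ℝ U w' (0, 1)) w (0, 1)
        = 0 := by
  intro w
  obtain rfl : U = expRescale τ₀ u := hU
  have hτ : τ₀ ≠ 0 := hτ₀.ne'
  have hud : Differentiable ℝ u := hu.differentiable (by norm_num)
  have hv' : Differentiable ℝ (fderiv ℝ v) :=
    (hv.fderiv_right (m := 1) (by norm_num)).differentiable one_ne_zero
  have hpartial (e p : ℝ × ℝ) : DifferentiableAt ℝ (fun p => fderiv ℝ v p e) p :=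
    (hv' p).clm_apply (differentiableAt_const e)
  have hfirst : (fun w' => fderiv ℝ (expRescale τ₀ u) w' (1, 0) + expRescale τ₀ u w' / τ₀)
      = rescaleFst (fun _ => 1) (fun t => exp (t / τ₀)) (fun p => fderiv ℝ v p (0, 1)) := by
    funext w'
    rw [fderiv_expRescale_apply_one_zero_add_div hτ (hud _), rescaleFst, one_mul]
    exact sub_eq_zero.mp (heq₁ _)
  have hsecond :
      (fun w' => χ₀ ^ 2 / (expRescale τ₀ u w') ^ 2 * fderiv ℝ (expRescale τ₀ u) w' (0, 1)) =
        rescaleFst (fun t => exp (t / τ₀) / τ₀) (fun t => exp (t / τ₀))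
          (fun p => fderiv ℝ v p (1, 0)) := by
    funext w'
    rw [div_sq_mul_fderiv_expRescale_apply_zero_one hτ (hud _), rescaleFst,
      sub_eq_zero.mp (heq₂ _)]
  rw [hfirst, hsecond,
    fderiv_rescaleFst_apply_one_zero (hasDerivAt_const _ _) (hasDerivAt_exp_div _ _) (hpartial _ _),
    fderiv_rescaleFst_apply_zero_one (by fun_prop) (by fun_prop) (hpartial _ _),
    fderiv_fderiv_apply_s14 (hv' _), fderiv_fderiv_apply_s14 (hv' _),
    (hv.contDiffAt.isSymmSndFDerivAt (by norm_num)).eq (1, 0) (0, 1)]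
  ring

/-- If `(u, v)` with `u > 0` solve `∂u/∂x − ∂v/∂y = 0`,
`∂v/∂x − (χ₀²/u²) ∂u/∂y = 0`, then `U(t,X) := τ₀ e^{−t/τ₀} u(e^{t/τ₀}, X)` solves
the nonlinear hyperbolic heat equation
`∂/∂t(∂U/∂t + U/τ₀) − ∂/∂X((χ₀²/U²) ∂U/∂X) = 0`. -/
theorem hyperbolic_heat_equation
    (χ₀ τ₀ : ℝ) (hχ₀ : 0 < χ₀) (hτ₀ : 0 < τ₀)
    (u v : ℝ × ℝ → ℝ) (hu : ContDiff ℝ 2 u) (hv : ContDiff ℝ 2 v)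
    (hupos : ∀ p : ℝ × ℝ, 0 < u p)
    (heq₁ : ∀ p : ℝ × ℝ, fderiv ℝ u p (1, 0) - fderiv ℝ v p (0, 1) = 0)
    (heq₂ : ∀ p : ℝ × ℝ,
      fderiv ℝ v p (1, 0) - χ₀ ^ 2 / (u p) ^ 2 * fderiv ℝ u p (0, 1) = 0)
    (U : ℝ × ℝ → ℝ)
    (hU : U = fun w => τ₀ * Real.exp (-w.1 / τ₀) * u (Real.exp (w.1 / τ₀), w.2)) :
    ∀ w : ℝ × ℝ,
      fderiv ℝ (fun w' => fderiv ℝ U w' (1, 0) + U w' / τ₀) w (1, 0)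
        - fderiv ℝ (fun w' => χ₀ ^ 2 / (U w') ^ 2 * fderiv ℝ U w' (0, 1)) w (0, 1)
        = 0 :=
  hyperbolic_heat_equation_general χ₀ τ₀ hτ₀ u v hu hv heq₁ heq₂ U hU
end

section
/- Let γ ≠ ±1, set α = 1/2 + (γ−1)/4 and β = 1/2 − (γ−1)/4 (so α ≠ β), and define the gas-dynamics eigenvalues λ₁(r₁,r₂) = αr₁ + βr₂ and λ₂(r₁,r₂) = αr₂ + βr₁. Let x : ℝ² → ℝ be a C² function on an open subset of {(r₁,r₂) : r₁ > r₂} satisfying ∂²x/∂r₁∂r₂ − (1/(λ₁−λ₂))(∂λ₂/∂r₂) ∂x/∂r₁ + (1/(λ₁−λ₂))(∂λ₁/∂r₁) ∂x/∂r₂ = 0. Then φ(r₁,r₂) := (r₁−r₂)^{(α+β)/(α−β)} · x(r₁,r₂) = (r₁−r₂)^{2/(γ−1)} x(r₁,r₂) satisfies ∂²φ/∂r₁∂r₂ + (1/(λ₁−λ₂))(∂λ₁/∂r₂) ∂φ/∂r₁ − (1/(λ₁−λ₂))(∂λ₂/∂r₁) ∂φ/∂r₂ = 0 on the same set. -/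
/-!
With `u = r₁ − r₂` and `c = (α + β)/(α − β)`, the product rule expresses `φ = u^c x`, its first
derivatives and `∂²φ/∂r₁∂r₂` through `x`, `∂x/∂r₁`, `∂x/∂r₂` and `∂²x/∂r₁∂r₂`. Eliminating the
mixed derivative of `x` by the hodograph equation, the coefficient of `∂x/∂r₁ − ∂x/∂r₂` vanishes
because `c = (α + β)/(α − β)`, and that of `x` because `c − 1 = 2β/(α − β)`.
-/

open ContinuousLinearMap Topology

section
variable {f : ℝ × ℝ → ℝ} {p : ℝ × ℝ} (c : ℝ)

theorem hasFDerivAt_sub_rpow (hp : p.1 ≠ p.2) :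
    HasFDerivAt (fun q : ℝ × ℝ => (q.1 - q.2) ^ c)
      ((c * (p.1 - p.2) ^ (c - 1)) • (fst ℝ ℝ ℝ - snd ℝ ℝ ℝ)) p := by
  have hsub : HasFDerivAt (fun q : ℝ × ℝ => q.1 - q.2) (fst ℝ ℝ ℝ - snd ℝ ℝ ℝ) p :=
    hasFDerivAt_fst.sub hasFDerivAt_snd
  exact (Real.hasDerivAt_rpow_const (Or.inl (sub_ne_zero.mpr hp))).comp_hasFDerivAt p hsub

theorem fderiv_sub_rpow_mul_apply (hp : p.1 ≠ p.2) (hf : DifferentiableAt ℝ f p)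
    (v : ℝ × ℝ) :
    fderiv ℝ (fun q => (q.1 - q.2) ^ c * f q) p v
      = (p.1 - p.2) ^ c * fderiv ℝ f p v + c * (v.1 - v.2) * ((p.1 - p.2) ^ (c - 1) * f p) := by
  rw [HasFDerivAt.fderiv (f := fun q => (q.1 - q.2) ^ c * f q)
    ((hasFDerivAt_sub_rpow c hp).mul hf.hasFDerivAt)]
  simp only [add_apply, smul_apply, sub_apply, coe_fst', coe_snd', smul_eq_mul]
  ring

theorem fderiv_fderiv_sub_rpow_mul_apply (hp : p.1 ≠ p.2) (hf : ContDiffAt ℝ 2 f p)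
    (v w : ℝ × ℝ) :
    fderiv ℝ (fun q => fderiv ℝ (fun q' => (q'.1 - q'.2) ^ c * f q') q w) p v
      = (p.1 - p.2) ^ c * fderiv ℝ (fun q => fderiv ℝ f q w) p v
        + c * (p.1 - p.2) ^ (c - 1)
          * ((v.1 - v.2) * fderiv ℝ f p w + (w.1 - w.2) * fderiv ℝ f p v)
        + c * (c - 1) * (v.1 - v.2) * (w.1 - w.2) * ((p.1 - p.2) ^ (c - 1 - 1) * f p) := by
  have hne : ∀ᶠ q in 𝓝 p, q.1 ≠ q.2 :=
    (isOpen_ne_fun continuous_fst continuous_snd).mem_nhds hp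
  have hfd : ∀ᶠ q in 𝓝 p, DifferentiableAt ℝ f q :=
    (hf.eventually (by simp)).mono fun q hq => hq.differentiableAt (by norm_num)
  have hfw : DifferentiableAt ℝ (fun q => fderiv ℝ f q w) p :=
    ((hf.fderiv_right (m := 1) (by norm_num)).differentiableAt (by norm_num)).clm_apply
      (differentiableAt_const w)
  have hev : (fun q => fderiv ℝ (fun q' => (q'.1 - q'.2) ^ c * f q') q w) =ᶠ[𝓝 p]
      fun q => (q.1 - q.2) ^ c * fderiv ℝ f q w
        + c * (w.1 - w.2) * ((q.1 - q.2) ^ (c - 1) * f q) := by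
    filter_upwards [hne, hfd] with q hq hfq using fderiv_sub_rpow_mul_apply c hq hfq w
  have hfp : DifferentiableAt ℝ f p := hf.differentiableAt (by norm_num)
  have hfc : DifferentiableAt ℝ (fun q => (q.1 - q.2) ^ (c - 1) * f q) p :=
    ((hasFDerivAt_sub_rpow (c - 1) hp).mul hfp.hasFDerivAt).differentiableAt
  have hfwc : DifferentiableAt ℝ (fun q => (q.1 - q.2) ^ c * fderiv ℝ f q w) p :=
    ((hasFDerivAt_sub_rpow c hp).mul hfw.hasFDerivAt).differentiableAt
  rw [hev.fderiv_eq, fderiv_fun_add hfwc (hfc.const_mul _), fderiv_const_mul hfc, add_apply,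
    smul_apply, smul_eq_mul, fderiv_sub_rpow_mul_apply c hp hfw,
    fderiv_sub_rpow_mul_apply (c - 1) hp hfp]
  ring
end

theorem conservation_eq_of_hodograph_eq {α β u X X₁ X₂ X₁₂ : ℝ} (hαβ : α - β ≠ 0) (hu : u ≠ 0)
    (hX : X₁₂ - 1 / ((α - β) * u) * α * X₁ + 1 / ((α - β) * u) * α * X₂ = 0) :
    let c := (α + β) / (α - β)
    u ^ c * X₁₂ + c * u ^ (c - 1) * (X₂ - X₁) - c * (c - 1) * (u ^ (c - 1 - 1) * X)
      + 1 / ((α - β) * u) * β * (u ^ c * X₁ + c * (u ^ (c - 1) * X))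
      - 1 / ((α - β) * u) * β * (u ^ c * X₂ - c * (u ^ (c - 1) * X)) = 0 := by
  intro c
  have hX₁₂ : X₁₂ = α / ((α - β) * u) * (X₁ - X₂) := by linear_combination hX
  simp only [Real.rpow_sub_one hu, hX₁₂, c]
  field_simp
  ring

theorem gas_dynamics_factor_function_general
    (γ : ℝ) (hγ : γ ≠ 1)
    (α β : ℝ) (hα : α = 1 / 2 + (γ - 1) / 4) (hβ : β = 1 / 2 - (γ - 1) / 4)
    (Ω : Set (ℝ × ℝ)) (hΩ : IsOpen Ω) (hΩsub : Ω ⊆ {p : ℝ × ℝ | p.2 < p.1})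
    (x : ℝ × ℝ → ℝ) (hx : ContDiffOn ℝ 2 x Ω)
    -- `∂²x/∂r₁∂r₂ − (∂λ₂/∂r₂)/(λ₁−λ₂) ∂x/∂r₁ + (∂λ₁/∂r₁)/(λ₁−λ₂) ∂x/∂r₂ = 0`,
    -- with `∂λ₂/∂r₂ = ∂λ₁/∂r₁ = α` and `λ₁ − λ₂ = (α−β)(r₁−r₂)`:
    (heq : ∀ p ∈ Ω,
      fderiv ℝ (fun q => fderiv ℝ x q (0, 1)) p (1, 0)
        - 1 / ((α * p.1 + β * p.2) - (α * p.2 + β * p.1)) * α * fderiv ℝ x p (1, 0)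
        + 1 / ((α * p.1 + β * p.2) - (α * p.2 + β * p.1)) * α * fderiv ℝ x p (0, 1)
        = 0) :
    (α + β) / (α - β) = 2 / (γ - 1)
    ∧ ∀ p ∈ Ω,
      -- `∂²φ/∂r₁∂r₂ + (∂λ₁/∂r₂)/(λ₁−λ₂) ∂φ/∂r₁ − (∂λ₂/∂r₁)/(λ₁−λ₂) ∂φ/∂r₂ = 0`,
      -- with `∂λ₁/∂r₂ = ∂λ₂/∂r₁ = β` and `φ = (r₁−r₂)^{(α+β)/(α−β)} x`:
      fderiv ℝ (fun q =>
          fderiv ℝ (fun q' => (q'.1 - q'.2) ^ ((α + β) / (α - β)) * x q') q (0, 1))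
          p (1, 0)
        + 1 / ((α * p.1 + β * p.2) - (α * p.2 + β * p.1)) * β
          * fderiv ℝ (fun q' => (q'.1 - q'.2) ^ ((α + β) / (α - β)) * x q') p (1, 0)
        - 1 / ((α * p.1 + β * p.2) - (α * p.2 + β * p.1)) * β
          * fderiv ℝ (fun q' => (q'.1 - q'.2) ^ ((α + β) / (α - β)) * x q') p (0, 1)
        = 0 := by
  have hdiff : α - β = (γ - 1) / 2 := by rw [hα, hβ]; ring
  have hsum : α + β = 1 := by rw [hα, hβ]; ring
  refine ⟨by rw [hdiff, hsum, one_div_div], fun p hp => ?_⟩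
  have hαβ : α - β ≠ 0 := by rw [hdiff]; exact div_ne_zero (sub_ne_zero.mpr hγ) two_ne_zero
  have hp' : p.1 ≠ p.2 := (hΩsub hp).ne'
  have hxp : ContDiffAt ℝ 2 x p := hx.contDiffAt (hΩ.mem_nhds hp)
  have hgap : (α * p.1 + β * p.2) - (α * p.2 + β * p.1) = (α - β) * (p.1 - p.2) := by ring
  have hxd : DifferentiableAt ℝ x p := hxp.differentiableAt (by norm_num)
  have hxe := heq p hp
  rw [hgap] at hxe ⊢
  rw [fderiv_fderiv_sub_rpow_mul_apply _ hp' hxp, fderiv_sub_rpow_mul_apply _ hp' hxd,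
    fderiv_sub_rpow_mul_apply _ hp' hxd]
  linear_combination conservation_eq_of_hodograph_eq (X := x p) hαβ (sub_ne_zero.mpr hp') hxe

/-- For the polytropic gas eigenvalues `λ₁ = αr₁+βr₂`, `λ₂ = αr₂+βr₁`
(`α = 1/2+(γ−1)/4`, `β = 1/2−(γ−1)/4`, `γ ≠ ±1`), if `x` satisfies its second-order
hodograph equation on an open subset of `{r₁ > r₂}`, then
`φ = (r₁−r₂)^{(α+β)/(α−β)} x = (r₁−r₂)^{2/(γ−1)} x` satisfies the second-order
conservation-law equation there. -/
theorem gas_dynamics_factor_function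
    (γ : ℝ) (hγ : γ ≠ 1) (hγ' : γ ≠ -1)
    (α β : ℝ) (hα : α = 1 / 2 + (γ - 1) / 4) (hβ : β = 1 / 2 - (γ - 1) / 4)
    (Ω : Set (ℝ × ℝ)) (hΩ : IsOpen Ω) (hΩsub : Ω ⊆ {p : ℝ × ℝ | p.2 < p.1})
    (x : ℝ × ℝ → ℝ) (hx : ContDiffOn ℝ 2 x Ω)
    -- `∂²x/∂r₁∂r₂ − (∂λ₂/∂r₂)/(λ₁−λ₂) ∂x/∂r₁ + (∂λ₁/∂r₁)/(λ₁−λ₂) ∂x/∂r₂ = 0`,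
    -- with `∂λ₂/∂r₂ = ∂λ₁/∂r₁ = α` and `λ₁ − λ₂ = (α−β)(r₁−r₂)`:
    (heq : ∀ p ∈ Ω,
      fderiv ℝ (fun q => fderiv ℝ x q (0, 1)) p (1, 0)
        - 1 / ((α * p.1 + β * p.2) - (α * p.2 + β * p.1)) * α * fderiv ℝ x p (1, 0)
        + 1 / ((α * p.1 + β * p.2) - (α * p.2 + β * p.1)) * α * fderiv ℝ x p (0, 1)
        = 0) :
    (α + β) / (α - β) = 2 / (γ - 1)
    ∧ ∀ p ∈ Ω,
      -- `∂²φ/∂r₁∂r₂ + (∂λ₁/∂r₂)/(λ₁−λ₂) ∂φ/∂r₁ − (∂λ₂/∂r₁)/(λ₁−λ₂) ∂φ/∂r₂ = 0`,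
      -- with `∂λ₁/∂r₂ = ∂λ₂/∂r₁ = β` and `φ = (r₁−r₂)^{(α+β)/(α−β)} x`:
      fderiv ℝ (fun q =>
          fderiv ℝ (fun q' => (q'.1 - q'.2) ^ ((α + β) / (α - β)) * x q') q (0, 1))
          p (1, 0)
        + 1 / ((α * p.1 + β * p.2) - (α * p.2 + β * p.1)) * β
          * fderiv ℝ (fun q' => (q'.1 - q'.2) ^ ((α + β) / (α - β)) * x q') p (1, 0)
        - 1 / ((α * p.1 + β * p.2) - (α * p.2 + β * p.1)) * β
          * fderiv ℝ (fun q' => (q'.1 - q'.2) ^ ((α + β) / (α - β)) * x q') p (0, 1)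
        = 0 :=
  gas_dynamics_factor_function_general γ hγ α β hα hβ Ω hΩ hΩsub x hx heq
end

section
/- Let w : ℝ² → ℝ be a C² function of (x,t) satisfying the Born–Infeld equation [1+(∂w/∂x)²] ∂²w/∂t² − 2 (∂w/∂x)(∂w/∂t) ∂²w/∂x∂t − [1−(∂w/∂t)²] ∂²w/∂x² = 0 on an open set where 1 + (∂w/∂x)² − (∂w/∂t)² > 0. With u := ∂w/∂x, v := ∂w/∂t, define r := (−uv − √(1+u²−v²))/(1+u²) and s := (−uv + √(1+u²−v²))/(1+u²). Then r and s satisfy ∂r/∂t + s ∂r/∂x = 0 and ∂s/∂t + r ∂s/∂x = 0 on that set. -/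
/-!
With `u = w_x`, `v = w_t` and `A = 1 + u²`, the functions `r` and `s` are the two roots `λ`
of the characteristic polynomial `A λ² + 2uvλ + v² - 1`, which equals
`((Aλ + uv)² - (1 + u² - v²)) / A`. Differentiating gives
`(Aλ + uv) dλ = -(uλ + v) (λ du + dv)`, and `Aλ + uv = ∓√(1 + u² - v²)` does not vanish,
so `dλ` vanishes on every direction `h` with `λ du(h) + dv(h) = 0`. For `λ = r` and
`h = (s, 1)`, the symmetry `u_t = v_x` of second derivatives and Vieta's formulas turn
`A (r du(h) + dv(h))` into the left-hand side of the Born–Infeld equation; symmetrically for `s`.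
-/

open Filter Topology

section

variable {E : Type*} [NormedAddCommGroup E] [NormedSpace ℝ E]

theorem ContDiffAt.differentiableAt_fderiv_apply {w : E → ℝ} {p : E} (hw : ContDiffAt ℝ 2 w p)
    (x : E) : DifferentiableAt ℝ (fun q => fderiv ℝ w q x) p :=
  ((hw.fderiv_right le_rfl).differentiableAt one_ne_zero).clm_apply (differentiableAt_const x)

theorem ContDiffAt.fderiv_fderiv_apply_comm {w : E → ℝ} {p : E} (hw : ContDiffAt ℝ 2 w p)
    (x y : E) :
    fderiv ℝ (fun q => fderiv ℝ w q x) p y = fderiv ℝ (fun q => fderiv ℝ w q y) p x := by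
  have hw' := (hw.fderiv_right le_rfl).differentiableAt one_ne_zero
  rw [fderiv_clm_apply hw' (differentiableAt_const x),
    fderiv_clm_apply hw' (differentiableAt_const y)]
  simpa using hw.isSymmSndFDerivAt (by simp [minSmoothness_of_isRCLikeNormedField]) y x

end

theorem ContinuousLinearMap.apply_mk_one (L : ℝ × ℝ →L[ℝ] ℝ) (c : ℝ) :
    L (c, 1) = c * L (1, 0) + L (0, 1) := by
  have : ((c, 1) : ℝ × ℝ) = c • (1, 0) + (0, 1) := by ext <;> simp
  rw [this, map_add, map_smul, smul_eq_mul]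

namespace BornInfeld

def charPoly (u v l : ℝ) : ℝ := (1 + u ^ 2) * l ^ 2 + 2 * u * v * l + v ^ 2 - 1

theorem charPoly_eq_zero_of_sq_eq {u v l : ℝ}
    (hl : ((1 + u ^ 2) * l + u * v) ^ 2 = 1 + u ^ 2 - v ^ 2) : charPoly u v l = 0 := by
  have hA : 1 + u ^ 2 ≠ 0 := by positivity
  have : (1 + u ^ 2) * charPoly u v l = 0 := by
    unfold charPoly
    linear_combination hl
  simpa [hA] using this

theorem char_combination_eq_zero {u v σ r s ux vx vt : ℝ} (hσ : σ ^ 2 = 1 + u ^ 2 - v ^ 2)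
    (hr : (1 + u ^ 2) * r + u * v = -σ) (hs : (1 + u ^ 2) * s + u * v = σ)
    (hBI : (1 + u ^ 2) * vt - 2 * u * v * vx - (1 - v ^ 2) * ux = 0) :
    r * (s * ux + vx) + (s * vx + vt) = 0 := by
  have hA : 1 + u ^ 2 ≠ 0 := by positivity
  have hsum : (1 + u ^ 2) * (r + s) = -2 * u * v := by linear_combination hr + hs
  have hprod : (1 + u ^ 2) * (r * s) = v ^ 2 - 1 := by
    have : (1 + u ^ 2) * ((1 + u ^ 2) * (r * s) - (v ^ 2 - 1)) = 0 := by
      linear_combination (1 + u ^ 2) * s * hr + (-σ - u * v) * hs - hσ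
    simpa [hA, sub_eq_zero] using this
  have : (1 + u ^ 2) * (r * (s * ux + vx) + (s * vx + vt)) = 0 := by
    linear_combination ux * hprod + vx * hsum + hBI
  simpa [hA] using this

theorem fderiv_apply_eq_zero_of_charPoly {E : Type*} [NormedAddCommGroup E] [NormedSpace ℝ E]
    {u v l : E → ℝ} {p : E}
    (hu : DifferentiableAt ℝ u p) (hv : DifferentiableAt ℝ v p) (hl : DifferentiableAt ℝ l p)
    (hroot : ∀ᶠ q in 𝓝 p, charPoly (u q) (v q) (l q) = 0)
    (hl₀ : (1 + u p ^ 2) * l p + u p * v p ≠ 0) {h : E}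
    (hh : l p * fderiv ℝ u p h + fderiv ℝ v p h = 0) : fderiv ℝ l p h = 0 := by
  have hF := ((((hasFDerivAt_const 1 p).add (hu.hasFDerivAt.pow 2)).mul
    (hl.hasFDerivAt.pow 2)).add ((((hasFDerivAt_const 2 p).mul hu.hasFDerivAt).mul
    hv.hasFDerivAt).mul hl.hasFDerivAt)).add (hv.hasFDerivAt.pow 2) |>.sub (hasFDerivAt_const 1 p)
  have h0 := congrArg (· h) (hF.unique ((hasFDerivAt_const 0 p).congr_of_eventuallyEq hroot))
  simp only [Pi.add_apply, Nat.add_one_sub_one, pow_one, nsmul_eq_mul, Nat.cast_ofNat, zero_add,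
    Pi.mul_apply, smul_zero, add_zero, smul_add, sub_zero, add_apply,
    smul_apply, smul_eq_mul, zero_apply] at h0
  have : ((1 + u p ^ 2) * l p + u p * v p) * fderiv ℝ l p h = 0 := by
    linear_combination h0 / 2 - (u p * l p + v p) * hh
  simpa [hl₀] using this

theorem transport_of_charPoly {u v l : ℝ × ℝ → ℝ} {p : ℝ × ℝ} {c : ℝ}
    (hu : DifferentiableAt ℝ u p) (hv : DifferentiableAt ℝ v p) (hl : DifferentiableAt ℝ l p)
    (hroot : ∀ᶠ q in 𝓝 p, charPoly (u q) (v q) (l q) = 0)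
    (hl₀ : (1 + u p ^ 2) * l p + u p * v p ≠ 0)
    (hut : fderiv ℝ u p (0, 1) = fderiv ℝ v p (1, 0))
    (hchar : l p * (c * fderiv ℝ u p (1, 0) + fderiv ℝ v p (1, 0))
      + (c * fderiv ℝ v p (1, 0) + fderiv ℝ v p (0, 1)) = 0) :
    fderiv ℝ l p (0, 1) + c * fderiv ℝ l p (1, 0) = 0 := by
  rw [add_comm, ← ContinuousLinearMap.apply_mk_one]
  refine fderiv_apply_eq_zero_of_charPoly hu hv hl hroot hl₀ ?_
  rwa [ContinuousLinearMap.apply_mk_one (fderiv ℝ u p) c,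
    ContinuousLinearMap.apply_mk_one (fderiv ℝ v p) c, hut]

end BornInfeld

/-- For a C² solution `w(x,t)` of the Born–Infeld equation on an open
set where `1 + w_x² − w_t² > 0`, the Riemann invariants
`r = (−uv − √(1+u²−v²))/(1+u²)`, `s = (−uv + √(1+u²−v²))/(1+u²)` (with `u = w_x`,
`v = w_t`) satisfy `∂r/∂t + s ∂r/∂x = 0` and `∂s/∂t + r ∂s/∂x = 0`.
Here points of `ℝ × ℝ` are `(x, t)`. -/
theorem born_infeld_riemann_invariants
    (w : ℝ × ℝ → ℝ) (Ω : Set (ℝ × ℝ)) (hΩ : IsOpen Ω)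
    (hw : ContDiffOn ℝ 2 w Ω)
    (hhyp : ∀ p ∈ Ω, 0 < 1 + fderiv ℝ w p (1, 0) ^ 2 - fderiv ℝ w p (0, 1) ^ 2)
    (hBI : ∀ p ∈ Ω,
      (1 + fderiv ℝ w p (1, 0) ^ 2)
          * fderiv ℝ (fun q => fderiv ℝ w q (0, 1)) p (0, 1)
        - 2 * fderiv ℝ w p (1, 0) * fderiv ℝ w p (0, 1)
          * fderiv ℝ (fun q => fderiv ℝ w q (0, 1)) p (1, 0)
        - (1 - fderiv ℝ w p (0, 1) ^ 2)
          * fderiv ℝ (fun q => fderiv ℝ w q (1, 0)) p (1, 0) = 0)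
    (r s : ℝ × ℝ → ℝ)
    (hr : r = fun q =>
      (-(fderiv ℝ w q (1, 0) * fderiv ℝ w q (0, 1))
        - Real.sqrt (1 + fderiv ℝ w q (1, 0) ^ 2 - fderiv ℝ w q (0, 1) ^ 2))
      / (1 + fderiv ℝ w q (1, 0) ^ 2))
    (hs : s = fun q =>
      (-(fderiv ℝ w q (1, 0) * fderiv ℝ w q (0, 1))
        + Real.sqrt (1 + fderiv ℝ w q (1, 0) ^ 2 - fderiv ℝ w q (0, 1) ^ 2))
      / (1 + fderiv ℝ w q (1, 0) ^ 2)) :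
    ∀ p ∈ Ω,
      (fderiv ℝ r p (0, 1) + s p * fderiv ℝ r p (1, 0) = 0)
      ∧ (fderiv ℝ s p (0, 1) + r p * fderiv ℝ s p (1, 0) = 0) := by
  intro p hp
  set u : ℝ × ℝ → ℝ := fun q => fderiv ℝ w q (1, 0)
  set v : ℝ × ℝ → ℝ := fun q => fderiv ℝ w q (0, 1)
  have hwp : ContDiffAt ℝ 2 w p := hw.contDiffAt (hΩ.mem_nhds hp)
  have hu : DifferentiableAt ℝ u p := hwp.differentiableAt_fderiv_apply (1, 0)
  have hv : DifferentiableAt ℝ v p := hwp.differentiableAt_fderiv_apply (0, 1)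
  have hut : fderiv ℝ u p (0, 1) = fderiv ℝ v p (1, 0) := hwp.fderiv_fderiv_apply_comm _ _
  set σ : ℝ × ℝ → ℝ := fun q => √(1 + u q ^ 2 - v q ^ 2)
  have hσ : ∀ q ∈ Ω, σ q ^ 2 = 1 + u q ^ 2 - v q ^ 2 := fun q hq =>
    Real.sq_sqrt (hhyp q hq).le
  have hσp : σ p ≠ 0 := (Real.sqrt_pos.2 (hhyp p hp)).ne'
  have hrσ : ∀ q, (1 + u q ^ 2) * r q + u q * v q = -σ q := by
    intro q; rw [hr, mul_div_cancel₀ _ (by positivity)]; ring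
  have hsσ : ∀ q, (1 + u q ^ 2) * s q + u q * v q = σ q := by
    intro q; rw [hs, mul_div_cancel₀ _ (by positivity)]; ring
  have hrd : DifferentiableAt ℝ r p := by
    rw [hr]; fun_prop (disch := first | positivity | exact (hhyp p hp).ne')
  have hsd : DifferentiableAt ℝ s p := by
    rw [hs]; fun_prop (disch := first | positivity | exact (hhyp p hp).ne')
  have hroots : ∀ᶠ q in 𝓝 p,
      BornInfeld.charPoly (u q) (v q) (r q) = 0 ∧ BornInfeld.charPoly (u q) (v q) (s q) = 0 :=
    eventually_of_mem (hΩ.mem_nhds hp) fun q hq =>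
      ⟨BornInfeld.charPoly_eq_zero_of_sq_eq (by rw [hrσ, neg_sq, hσ q hq]),
        BornInfeld.charPoly_eq_zero_of_sq_eq (by rw [hsσ, hσ q hq])⟩
  exact ⟨BornInfeld.transport_of_charPoly hu hv hrd (hroots.mono fun _ h => h.1)
      (by rw [hrσ]; exact neg_ne_zero.2 hσp) hut
      (BornInfeld.char_combination_eq_zero (hσ p hp) (hrσ p) (hsσ p) (hBI p hp)),
    BornInfeld.transport_of_charPoly hu hv hsd (hroots.mono fun _ h => h.2)
      (by rw [hsσ]; exact hσp) hut
      (BornInfeld.char_combination_eq_zero (by rw [neg_sq, hσ p hp]) (by rw [neg_neg, hsσ])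
        (hrσ p) (hBI p hp))⟩
end
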